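/- arXiv:2309.08054 — 3 statements merged into one kernel-verified Lean document; each statement's English description precedes it below -/
import Mathlib

section
/- Let d ≥ 1 and let f, g : ℂ → ℂ be monic degree-d polynomials with real coefficients, written f(x) = x^d + ∑_{t=0}^{d−1} a_t x^t = ∏_{i=1}^d (x − λ_i) and g(x) = x^d + ∑_{t=0}^{d−1} b_t x^t = ∏_{i=1}^d (x − μ_i), where μ_1, …, μ_d ∈ ℂ are the roots of g counted with multiplicity. Assume the roots λ_1, …, λ_d of f are all distinct, real, and negative (so all coefficients a_t are positive), and assume min_{i≠j} |λ_i − λ_j| ≥ δ for some constant δ > 0. Then min_{π ∈ S_d} max_{i ∈ [d]} |Re(μ_{π(i)}) − λ_i| ≤ ((2d − 1) d² / δ^{d−1}) · (2 + max_{t ∈ {0,…,d−1}} a_t)^{2d} · max_{t ∈ {0,…,d−1}} |a_t − b_t|. -/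
open Finset

open Finset

lemma hall_matching (d : ℕ) (hd : 1 ≤ d) (lam ν : Fin d → ℝ) (δ η : ℝ) (hδ : 0 < δ)
    (hsep : ∀ i j, i ≠ j → δ ≤ |lam i - lam j|)
    (hprod : ∀ i, ∏ j, |lam i - ν j| ≤ η) :
    ∃ π : Equiv.Perm (Fin d), ∀ i, |ν (π i) - lam i| ≤ 2 ^ d * η / δ ^ (d - 1) := by
  have hη0 : 0 ≤ η := le_trans (Finset.prod_nonneg fun j _ => abs_nonneg _) (hprod ⟨0, hd⟩)
  set ρ : ℝ := max (δ / 2) (2 ^ d * η / δ ^ (d - 1)) with hρ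
  have hρδ : δ / 2 ≤ ρ := le_max_left _ _
  have hρ0 : 0 < ρ := lt_of_lt_of_le (by linarith) hρδ
  -- key computation: (δ/2)^(d-1) * (2^d η / δ^(d-1)) = 2η
  have hkey : (δ / 2) ^ (d - 1) * (2 ^ d * η / δ ^ (d - 1)) = 2 * η := by
    have hδne : δ ^ (d - 1) ≠ 0 := pow_ne_zero _ (ne_of_gt hδ)
    have h2 : (2:ℝ) ^ d = 2 * 2 ^ (d - 1) := by
      conv_lhs => rw [show d = (d - 1) + 1 from (Nat.succ_pred_eq_of_pos hd).symm]
      ring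
    rw [div_pow, h2]
    field_simp
  have hkey2 : 2 * η ≤ (δ / 2) ^ (d - 1) * ρ := by
    calc 2 * η = (δ / 2) ^ (d - 1) * (2 ^ d * η / δ ^ (d - 1)) := hkey.symm
    _ ≤ (δ / 2) ^ (d - 1) * ρ := by
        apply mul_le_mul_of_nonneg_left (le_max_right _ _)
        positivity
  -- the bipartite graph
  set t : Fin d → Finset (Fin d) := fun i => univ.filter (fun j => |ν j - lam i| < ρ) with ht
  have hall : ∀ S : Finset (Fin d), S.card ≤ (S.biUnion t).card := by
    intro S
    by_contra hc
    push_neg at hc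
    set T := S.biUnion t with hT
    -- Bad = members of S blocked by some element of T
    set Bad := S.filter (fun i => ∃ j ∈ T, |ν j - lam i| < δ / 2) with hBad
    have hBadcard : Bad.card ≤ T.card := by
      have hw : ∀ i ∈ Bad, ∃ j ∈ T, |ν j - lam i| < δ / 2 := by
        intro i hi
        exact (Finset.mem_filter.1 hi).2
      choose f hfT hfd using hw
      apply Finset.card_le_card_of_injOn (fun i => if h : i ∈ Bad then f i h else i)
      · intro i hi; simp only [Finset.mem_coe] at hi ⊢; rw [dif_pos hi]; exact hfT i hi
      · intro i hi i' hi' hEq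
        simp only [Finset.mem_coe] at hi hi'
        simp only [dif_pos hi, dif_pos hi'] at hEq
        by_contra hne
        have h1 := hfd i hi
        have h2 := hfd i' hi'
        rw [hEq] at h1
        have habs : |lam i - lam i'| ≤ |ν (f i' hi') - lam i| + |ν (f i' hi') - lam i'| := by
          rw [abs_sub_comm (ν _) (lam i)]
          exact abs_sub_le _ _ _
        linarith [hsep i i' hne]
    have hBadS : Bad.card < S.card := lt_of_le_of_lt hBadcard hc
    have hsubBS : Bad ⊆ S := Finset.filter_subset _ _
    have hne : (S \ Bad).Nonempty := by
      rw [← Finset.card_pos, Finset.card_sdiff_of_subset hsubBS]; omega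
    obtain ⟨i, himem⟩ := hne
    obtain ⟨hiS, hiBad⟩ := Finset.mem_sdiff.1 himem
    have hiBad' : ∀ j ∈ T, δ / 2 ≤ |ν j - lam i| := by
      intro j hj
      by_contra h
      push_neg at h
      exact hiBad (Finset.mem_filter.2 ⟨hiS, j, hj, h⟩)
    -- lower bound on the product at λ i
    have hlow : ∀ j, (if j ∈ T then δ / 2 else ρ) ≤ |lam i - ν j| := by
      intro j
      rw [abs_sub_comm]
      split_ifs with hj
      · exact hiBad' j hj
      · have : j ∉ t i := fun hji => hj (Finset.mem_biUnion.2 ⟨i, hiS, hji⟩)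
        simp only [ht, Finset.mem_filter, Finset.mem_univ, true_and, not_lt] at this
        exact this
    have hprodlow : (δ / 2) ^ T.card * ρ ^ (Tᶜ.card) ≤ ∏ j, |lam i - ν j| := by
      have := Finset.prod_le_prod (s := (univ : Finset (Fin d)))
        (f := fun j => if j ∈ T then δ / 2 else ρ) (g := fun j => |lam i - ν j|)
        (fun j _ => by split_ifs <;> positivity) (fun j _ => hlow j)
      calc (δ / 2) ^ T.card * ρ ^ (Tᶜ.card)
          = (∏ _j ∈ T, (δ / 2)) * (∏ _j ∈ Tᶜ, ρ) := by
            rw [Finset.prod_const, Finset.prod_const]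
        _ = (∏ j ∈ T, (if j ∈ T then δ / 2 else ρ))
            * (∏ j ∈ Tᶜ, (if j ∈ T then δ / 2 else ρ)) := by
            congr 1
            · exact Finset.prod_congr rfl (fun j hj => (if_pos hj).symm)
            · exact Finset.prod_congr rfl (fun j hj => (if_neg (Finset.mem_compl.1 hj)).symm)
        _ = ∏ j, (if j ∈ T then δ / 2 else ρ) := Finset.prod_mul_prod_compl T _
        _ ≤ _ := this
    -- card of complement positive
    have hTcard : T.card ≤ d - 1 := by
      have : T.card < S.card := hc
      have : S.card ≤ d := le_trans (Finset.card_le_card (Finset.subset_univ S)) (by simp)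
      omega
    have hTc : Tᶜ.card = d - T.card := by
      rw [Finset.card_compl]
      simp
    have hfinal : (δ / 2) ^ (d - 1) * ρ ≤ (δ / 2) ^ T.card * ρ ^ (Tᶜ.card) := by
      have h1 : Tᶜ.card = (d - 1 - T.card) + 1 := by omega
      rw [h1, pow_succ]
      have h2 : (δ / 2) ^ (d - 1) = (δ / 2) ^ T.card * (δ / 2) ^ (d - 1 - T.card) := by
        rw [← pow_add]; congr 1; omega
      rw [h2]
      have : (δ / 2) ^ (d - 1 - T.card) ≤ ρ ^ (d - 1 - T.card) :=
        pow_le_pow_left₀ (by positivity) hρδ _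
      have hh : (δ / 2) ^ T.card * (δ / 2) ^ (d - 1 - T.card) * ρ
          ≤ (δ / 2) ^ T.card * ρ ^ (d - 1 - T.card) * ρ := by
        apply mul_le_mul_of_nonneg_right _ (le_of_lt hρ0)
        apply mul_le_mul_of_nonneg_left this (by positivity)
      linarith
    have hchain : (δ / 2) ^ (d - 1) * ρ ≤ η :=
      hfinal.trans (hprodlow.trans (hprod i))
    have h2η : 2 * η ≤ η := hkey2.trans hchain
    have hη00 : η = 0 := by linarith
    have hpos : (0:ℝ) < (δ / 2) ^ (d - 1) * ρ := by positivity
    rw [hη00] at hchain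
    linarith
  obtain ⟨f, hfinj, hft⟩ := (Finset.all_card_le_biUnion_card_iff_exists_injective t).1 hall
  have hfbij : Function.Bijective f := (Finite.injective_iff_bijective).1 hfinj
  set π : Equiv.Perm (Fin d) := Equiv.ofBijective f hfbij with hπ
  have hπρ : ∀ i, |ν (π i) - lam i| < ρ := by
    intro i
    have := hft i
    simp only [ht, Finset.mem_filter] at this
    exact this.2
  -- case on ρ
  rcases max_cases (δ / 2) (2 ^ d * η / δ ^ (d - 1)) with ⟨h1, h2⟩ | ⟨h1, h2⟩
  · -- ρ = δ/2 ; post-process to get the linear bound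
    refine ⟨π, fun i => ?_⟩
    have hsmall : ∀ j, j ≠ π i → δ / 2 ≤ |lam i - ν j| := by
      intro j hj
      have hk : π (π.symm j) = j := π.apply_symm_apply j
      have hki : π.symm j ≠ i := by
        intro h; rw [h] at hk; exact hj hk.symm
      have h3 : |ν j - lam (π.symm j)| < δ / 2 := by
        have h5 := hπρ (π.symm j); rw [hk] at h5; rw [hρ, h1] at h5; exact h5
      have h4 : δ ≤ |lam i - lam (π.symm j)| := hsep i _ (fun h => hki (by rw [h]))
      have : |lam i - lam (π.symm j)| ≤ |lam i - ν j| + |ν j - lam (π.symm j)| := by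
        have := abs_sub_le (lam i) (ν j) (lam (π.symm j))
        linarith [this]
      linarith
    have hsplit : |lam i - ν (π i)| * ∏ j ∈ univ.erase (π i), |lam i - ν j| = ∏ j, |lam i - ν j| :=
      Finset.mul_prod_erase univ (fun j => |lam i - ν j|) (Finset.mem_univ (π i))
    have herase : (δ / 2) ^ (d - 1) ≤ ∏ j ∈ univ.erase (π i), |lam i - ν j| := by
      have hcard : (univ.erase (π i)).card = d - 1 := by
        rw [Finset.card_erase_of_mem (Finset.mem_univ _)]; simp
      calc (δ / 2) ^ (d - 1) = ∏ _j ∈ univ.erase (π i), (δ / 2) := by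
            rw [Finset.prod_const, hcard]
      _ ≤ _ := Finset.prod_le_prod (fun j _ => by positivity)
            (fun j hj => hsmall j (Finset.ne_of_mem_erase hj))
    have hmain : |lam i - ν (π i)| * (δ / 2) ^ (d - 1) ≤ η := by
      calc |lam i - ν (π i)| * (δ / 2) ^ (d - 1)
          ≤ |lam i - ν (π i)| * ∏ j ∈ univ.erase (π i), |lam i - ν j| :=
            mul_le_mul_of_nonneg_left herase (abs_nonneg _)
      _ = ∏ j, |lam i - ν j| := hsplit
      _ ≤ η := hprod i
    have hb : |lam i - ν (π i)| ≤ η / (δ / 2) ^ (d - 1) := by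
      rw [le_div_iff₀ (by positivity)]
      exact hmain
    rw [abs_sub_comm]
    calc |lam i - ν (π i)| ≤ η / (δ / 2) ^ (d - 1) := hb
    _ = 2 ^ (d-1) * η / δ ^ (d - 1) := by
        rw [div_pow]; field_simp
    _ ≤ 2 ^ d * η / δ ^ (d - 1) := by
        gcongr
        · norm_num
        · exact Nat.sub_le d 1
  · -- ρ = 2^d η / δ^(d-1)
    refine ⟨π, fun i => ?_⟩
    have h5 := hπρ i
    rw [hρ, h1] at h5
    exact le_of_lt h5


open Finset Polynomial

lemma coeff_nonneg_of_neg_roots (d : ℕ) (lam : Fin d → ℝ) (hneg : ∀ i, lam i < 0) :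
    ∀ n, 0 ≤ (∏ i, (X - C (lam i)) : ℝ[X]).coeff n := by
  refine Finset.prod_induction _ (fun p => ∀ n, 0 ≤ Polynomial.coeff p n) ?_ ?_ ?_
  · intro p q hp hq n
    rw [Polynomial.coeff_mul]
    exact Finset.sum_nonneg fun x _ => mul_nonneg (hp _) (hq _)
  · intro n
    rw [Polynomial.coeff_one]
    split_ifs <;> norm_num
  · intro i _ n
    rw [Polynomial.coeff_sub, Polynomial.coeff_X, Polynomial.coeff_C]
    have h := hneg i
    split_ifs <;> norm_num <;> linarith

lemma coeff_id (d : ℕ) (a : Fin d → ℝ) (lam : Fin d → ℝ)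
    (hf : ∀ x : ℂ, x ^ d + ∑ t, (a t : ℂ) * x ^ (t : ℕ) = ∏ i, (x - (lam i : ℂ))) :
    ∀ t : Fin d, a t = (∏ i, (X - C (lam i)) : ℝ[X]).coeff t := by
  have hpoly : ((X : ℂ[X]) ^ d + ∑ t : Fin d, C ((a t : ℂ)) * X ^ (t : ℕ))
      = ∏ i, (X - C ((lam i : ℂ))) := by
    apply Polynomial.funext
    intro x
    simp only [eval_add, eval_pow, eval_X, eval_finset_sum, eval_mul, eval_C, eval_prod,
      eval_sub]
    exact hf x
  have hmap : (∏ i, (X - C ((lam i : ℂ))) : ℂ[X])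
      = ((∏ i, (X - C (lam i)) : ℝ[X]).map (algebraMap ℝ ℂ)) := by
    rw [Polynomial.map_prod]
    simp [Polynomial.map_sub]
  intro t
  have h1 : ((X : ℂ[X]) ^ d + ∑ s : Fin d, C ((a s : ℂ)) * X ^ (s : ℕ)).coeff t = (a t : ℂ) := by
    rw [Polynomial.coeff_add, Polynomial.coeff_X_pow, Polynomial.finset_sum_coeff]
    simp only [Polynomial.coeff_C_mul, Polynomial.coeff_X_pow]
    rw [Finset.sum_eq_single t]
    · rw [if_pos rfl, if_neg (Nat.ne_of_lt t.isLt), mul_one, zero_add]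
    · intro s _ hst
      rw [if_neg (fun h => hst (Fin.ext h.symm)), mul_zero]
    · intro h
      exact absurd (Finset.mem_univ t) h
  have h2 := congrArg (fun p => Polynomial.coeff p (t : ℕ)) hpoly
  rw [h1, hmap, Polynomial.coeff_map] at h2
  rw [Complex.coe_algebraMap] at h2
  exact_mod_cast h2


open Finset

lemma lcr_root_bound (d : ℕ) (hd : 1 ≤ d) (a lam : Fin d → ℝ)
    (hf : ∀ x : ℂ, x ^ d + ∑ t, (a t : ℂ) * x ^ (t : ℕ) = ∏ i, (x - (lam i : ℂ)))
    (ha : ∀ t, 0 ≤ a t) (A : ℝ) (hA : ∀ t, a t ≤ A) :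
    ∀ i, |lam i| ≤ 1 + A := by
  intro i
  have hA0 : 0 ≤ A := le_trans (ha ⟨0, hd⟩) (hA ⟨0, hd⟩)
  have h0 : ((lam i : ℂ)) ^ d + ∑ t, (a t : ℂ) * (lam i : ℂ) ^ (t : ℕ) = 0 := by
    rw [hf]
    exact Finset.prod_eq_zero (Finset.mem_univ i) (by simp)
  have hr : (lam i) ^ d + ∑ t, a t * (lam i) ^ (t : ℕ) = 0 := by
    have : ((lam i ^ d + ∑ t, a t * lam i ^ (t : ℕ) : ℝ) : ℂ) = 0 := by
      push_cast
      exact h0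
    exact_mod_cast this
  by_contra hcon
  push_neg at hcon
  set L := |lam i| with hL
  have hL1 : 1 < L := by linarith
  have hL0 : 0 < L := by linarith
  -- |lam i ^ d| ≤ A * ∑ L^t
  have habs : L ^ d ≤ A * ∑ t ∈ Finset.range d, L ^ t := by
    have h1 : L ^ d = |(lam i) ^ d| := by rw [abs_pow]
    have h2 : |(lam i) ^ d| = |∑ t : Fin d, a t * (lam i) ^ (t : ℕ)| := by
      rw [show (lam i) ^ d = -(∑ t : Fin d, a t * (lam i) ^ (t : ℕ)) by linarith [hr], abs_neg]
    have h3 : |∑ t : Fin d, a t * (lam i) ^ (t : ℕ)| ≤ ∑ t : Fin d, A * L ^ (t : ℕ) := by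
      refine le_trans (Finset.abs_sum_le_sum_abs _ _) (Finset.sum_le_sum fun t _ => ?_)
      rw [abs_mul, abs_pow, abs_of_nonneg (ha t)]
      exact mul_le_mul (hA t) le_rfl (by positivity) hA0
    have h4 : ∑ t : Fin d, A * L ^ (t : ℕ) = A * ∑ t ∈ Finset.range d, L ^ t := by
      rw [← Finset.mul_sum]
      congr 1
      exact Fin.sum_univ_eq_sum_range _ d
    rw [h1, h2] at *
    calc |∑ t : Fin d, a t * lam i ^ (t : ℕ)| ≤ ∑ t : Fin d, A * L ^ (t : ℕ) := h3
    _ = A * ∑ t ∈ Finset.range d, L ^ t := h4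
  have hgeom : (∑ t ∈ Finset.range d, L ^ t) * (L - 1) = L ^ d - 1 := geom_sum_mul L d
  have hSpos : 0 < ∑ t ∈ Finset.range d, L ^ t :=
    Finset.sum_pos (fun t _ => by positivity) ⟨0, Finset.mem_range.2 hd⟩
  have hlt : A * (∑ t ∈ Finset.range d, L ^ t) < (L - 1) * (∑ t ∈ Finset.range d, L ^ t) :=
    mul_lt_mul_of_pos_right (by linarith) hSpos
  nlinarith [habs, hgeom, hlt]



/-- Lipschitz continuity of roots.  Let `f(x) = x^d + ∑ a_t x^t = ∏ (x - λ_i)` and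
`g(x) = x^d + ∑ b_t x^t = ∏ (x - μ_i)` be monic degree-`d` polynomials with real
coefficients, where the roots `λ_i` of `f` are distinct, real and negative, and pairwise
separated by at least `δ > 0`.  Then there is a permutation `π` matching the roots such that
`max_i |Re(μ_{π i}) - λ_i| ≤ ((2d-1) d² / δ^{d-1}) (2 + max_t a_t)^{2d} max_t |a_t - b_t|`. -/
theorem lipschitz_continuity_of_roots (d : ℕ) (hd : 1 ≤ d)
    (a b : Fin d → ℝ) (lam : Fin d → ℝ) (mu : Fin d → ℂ) (δ : ℝ) (hδ : 0 < δ)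
    (hf : ∀ x : ℂ, x ^ d + ∑ t, (a t : ℂ) * x ^ (t : ℕ) = ∏ i, (x - (lam i : ℂ)))
    (hg : ∀ x : ℂ, x ^ d + ∑ t, (b t : ℂ) * x ^ (t : ℕ) = ∏ i, (x - mu i))
    (hneg : ∀ i, lam i < 0)
    (hsep : ∀ i j, i ≠ j → δ ≤ |lam i - lam j|) :
    ∃ π : Equiv.Perm (Fin d), ∀ i,
      |(mu (π i)).re - lam i| ≤
        ((2 * (d : ℝ) - 1) * (d : ℝ) ^ 2 / δ ^ (d - 1)) *
          (2 + Finset.univ.sup' ⟨⟨0, hd⟩, Finset.mem_univ _⟩ a) ^ (2 * d) *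
          Finset.univ.sup' ⟨⟨0, hd⟩, Finset.mem_univ _⟩ (fun t => |a t - b t|) := by
  classical
  set i0 : Fin d := ⟨0, hd⟩ with hi0
  set A : ℝ := Finset.univ.sup' ⟨i0, Finset.mem_univ _⟩ a with hA_def
  set ε : ℝ := Finset.univ.sup' ⟨i0, Finset.mem_univ _⟩ (fun t => |a t - b t|) with hε_def
  have hcoeff := coeff_id d a lam hf
  have ha : ∀ t, 0 ≤ a t := fun t => (hcoeff t) ▸ coeff_nonneg_of_neg_roots d lam hneg t
  have hA : ∀ t, a t ≤ A := fun t => Finset.le_sup' a (Finset.mem_univ t)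
  have hA0 : 0 ≤ A := le_trans (ha i0) (hA i0)
  have hε : ∀ t, |a t - b t| ≤ ε := fun t =>
    Finset.le_sup' (fun t => |a t - b t|) (Finset.mem_univ t)
  have hε0 : 0 ≤ ε := le_trans (abs_nonneg _) (hε i0)
  have hroot : ∀ i, |lam i| ≤ 1 + A := lcr_root_bound d hd a lam hf ha A hA
  set η : ℝ := (d : ℝ) * (1 + A) ^ (d - 1) * ε with hη_def
  -- key product bound
  have hprod : ∀ i, ∏ j, |lam i - (mu j).re| ≤ η := by
    intro i
    have hfe : ((lam i : ℂ)) ^ d + ∑ t, (a t : ℂ) * (lam i : ℂ) ^ (t : ℕ) = 0 := by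
      rw [hf]
      exact Finset.prod_eq_zero (Finset.mem_univ i) (by simp)
    have s3 : (∏ j, ((lam i : ℂ) - mu j))
        = ∑ t, ((b t : ℂ) - (a t : ℂ)) * (lam i : ℂ) ^ (t : ℕ) := by
      calc (∏ j, ((lam i : ℂ) - mu j))
          = (lam i : ℂ) ^ d + ∑ t, (b t : ℂ) * (lam i : ℂ) ^ (t : ℕ) := (hg _).symm
        _ = ((lam i : ℂ) ^ d + ∑ t, (a t : ℂ) * (lam i : ℂ) ^ (t : ℕ))
            + ∑ t, ((b t : ℂ) - (a t : ℂ)) * (lam i : ℂ) ^ (t : ℕ) := by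
            rw [add_assoc, ← Finset.sum_add_distrib]
            congr 1
            exact Finset.sum_congr rfl (fun t _ => by ring)
        _ = ∑ t, ((b t : ℂ) - (a t : ℂ)) * (lam i : ℂ) ^ (t : ℕ) := by
            rw [hfe, zero_add]
    have s1 : ∏ j, |lam i - (mu j).re| ≤ ∏ j, ‖(lam i : ℂ) - mu j‖ := by
      refine Finset.prod_le_prod (fun j _ => abs_nonneg _) (fun j _ => ?_)
      have h := Complex.abs_re_le_norm ((lam i : ℂ) - mu j)
      simpa using h
    have s2 : ∏ j, ‖(lam i : ℂ) - mu j‖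
        = ‖∏ j, ((lam i : ℂ) - mu j)‖ := (norm_prod _ _).symm
    have s4 : ‖∑ t, ((b t : ℂ) - (a t : ℂ)) * (lam i : ℂ) ^ (t : ℕ)‖
        ≤ ∑ t : Fin d, ε * (1 + A) ^ (d - 1) := by
      refine le_trans (norm_sum_le _ _) (Finset.sum_le_sum fun t _ => ?_)
      rw [norm_mul, norm_pow]
      have e1 : ‖(b t : ℂ) - (a t : ℂ)‖ = |a t - b t| := by
        rw [← Complex.ofReal_sub, Complex.norm_real, Real.norm_eq_abs, abs_sub_comm]
      have e2 : ‖((lam i : ℂ))‖ = |lam i| := by rw [Complex.norm_real, Real.norm_eq_abs]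
      rw [e1, e2]
      have e3 : |lam i| ^ (t : ℕ) ≤ (1 + A) ^ (d - 1) := by
        calc |lam i| ^ (t : ℕ) ≤ (1 + A) ^ (t : ℕ) :=
              pow_le_pow_left₀ (abs_nonneg _) (hroot i) _
          _ ≤ (1 + A) ^ (d - 1) :=
              pow_le_pow_right₀ (by linarith) (by omega)
      exact mul_le_mul (hε t) e3 (by positivity) hε0
    have s5 : ∑ t : Fin d, ε * (1 + A) ^ (d - 1) = η := by
      rw [Finset.sum_const, Finset.card_univ, Fintype.card_fin, nsmul_eq_mul, hη_def]
      ring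
    calc ∏ j, |lam i - (mu j).re| ≤ ∏ j, ‖(lam i : ℂ) - mu j‖ := s1
      _ = ‖∏ j, ((lam i : ℂ) - mu j)‖ := s2
      _ = ‖∑ t, ((b t : ℂ) - (a t : ℂ)) * (lam i : ℂ) ^ (t : ℕ)‖ := by rw [s3]
      _ ≤ ∑ t : Fin d, ε * (1 + A) ^ (d - 1) := s4
      _ = η := s5
  obtain ⟨π, hπ⟩ := hall_matching d hd lam (fun j => (mu j).re) δ η hδ hsep hprod
  refine ⟨π, fun i => ?_⟩
  refine le_trans (hπ i) ?_
  -- final arithmetic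
  have d1 : (1 : ℝ) ≤ (d : ℝ) := by exact_mod_cast hd
  have e6 : (4 : ℝ) ≤ (2 + A) ^ 2 := by nlinarith
  have h2d : (2 : ℝ) ^ d = 2 * 2 ^ (d - 1) := by
    conv_lhs => rw [show d = (d - 1) + 1 from by omega]
    ring
  have hnum : 2 ^ d * (d : ℝ) * (1 + A) ^ (d - 1)
      ≤ (2 * (d : ℝ) - 1) * (d : ℝ) ^ 2 * (2 + A) ^ (2 * d) := by
    have step1 : (2 : ℝ) ^ d * (d : ℝ) * (1 + A) ^ (d - 1)
        = 2 * (d : ℝ) * (2 + 2 * A) ^ (d - 1) := by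
      rw [show (2 + 2 * A : ℝ) = 2 * (1 + A) from by ring, mul_pow, h2d]
      ring
    have step2 : (2 + 2 * A : ℝ) ^ (d - 1) ≤ (2 + A) ^ (2 * d - 2) := by
      calc (2 + 2 * A : ℝ) ^ (d - 1) ≤ ((2 + A) ^ 2) ^ (d - 1) :=
            pow_le_pow_left₀ (by linarith) (by nlinarith) _
        _ = (2 + A) ^ (2 * d - 2) := by rw [← pow_mul]; congr 1; omega
    have hcoef : 2 * (d : ℝ) ≤ (2 * (d : ℝ) - 1) * (d : ℝ) ^ 2 * (2 + A) ^ 2 := by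
      nlinarith [sq_nonneg ((d : ℝ) - 1), sq_nonneg (d : ℝ), mul_le_mul_of_nonneg_left e6
        (mul_nonneg (by linarith : (0:ℝ) ≤ 2 * (d:ℝ) - 1) (by positivity : (0:ℝ) ≤ (d:ℝ)^2))]
    calc 2 ^ d * (d : ℝ) * (1 + A) ^ (d - 1)
        = 2 * (d : ℝ) * (2 + 2 * A) ^ (d - 1) := step1
      _ ≤ 2 * (d : ℝ) * (2 + A) ^ (2 * d - 2) := by
          apply mul_le_mul_of_nonneg_left step2 (by positivity)
      _ ≤ ((2 * (d : ℝ) - 1) * (d : ℝ) ^ 2 * (2 + A) ^ 2) * (2 + A) ^ (2 * d - 2) := by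
          apply mul_le_mul_of_nonneg_right hcoef (by positivity)
      _ = (2 * (d : ℝ) - 1) * (d : ℝ) ^ 2 * ((2 + A) ^ 2 * (2 + A) ^ (2 * d - 2)) := by ring
      _ = (2 * (d : ℝ) - 1) * (d : ℝ) ^ 2 * (2 + A) ^ (2 * d) := by
          rw [← pow_add]
          congr 2
          omega
  calc 2 ^ d * η / δ ^ (d - 1)
      = (2 ^ d * (d : ℝ) * (1 + A) ^ (d - 1)) * (ε / δ ^ (d - 1)) := by
        rw [hη_def]; ring
    _ ≤ ((2 * (d : ℝ) - 1) * (d : ℝ) ^ 2 * (2 + A) ^ (2 * d)) * (ε / δ ^ (d - 1)) := by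
        apply mul_le_mul_of_nonneg_right hnum (by positivity)
    _ = ((2 * (d : ℝ) - 1) * (d : ℝ) ^ 2 / δ ^ (d - 1)) * (2 + A) ^ (2 * d) * ε := by
        ring
end

section
/- Fix integers d ≥ 1 and p ≥ 2. Define the binary matrix C_1 ∈ {0,1}^{(d(p−1)+1) × dp}, with rows indexed by s ∈ {0, …, d(p−1)} and columns indexed by pairs (c,k) ∈ {1,…,d} × {0,…,p−1}, by [C_1]_{s,(c,k)} = 1 if and only if s = (c−1)(p−1) + k. Define the binary matrix C_2 ∈ {0,1}^{d × dp}, with rows indexed by s ∈ {1,…,d} and columns indexed by pairs (c,k) as above, by [C_2]_{s,(c,k)} = 1 if and only if c = s. Let C ∈ {0,1}^{(dp+1) × dp} be the vertical stacking of C_1 on top of C_2, and let C̃ ∈ {0,1}^{(dp+1) × (dp+1)} be obtained from C by prepending one extra column whose entry in the first row (row s = 0 of the C_1 block) is 1 and all other entries are 0. Then C̃ is invertible (as a matrix over ℝ), and every entry of C̃^{−1} lies in {−1, 0, 1}. -/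
/-- The explicit inverse matrix. -/
def ctildeInv (d p : ℕ) : Matrix (Unit ⊕ Fin d × Fin p) (Fin (d * (p - 1) + 1) ⊕ Fin d) ℝ
  | Sum.inl _, Sum.inl _ => 1
  | Sum.inl _, Sum.inr _ => -1
  | Sum.inr (c, k), Sum.inl s =>
      if (k : ℕ) = 0 then (if (c : ℕ) * (p - 1) < (s : ℕ) then -1 else 0)
      else if (k : ℕ) = p - 1 then
        (if (c : ℕ) * (p - 1) + (p - 1) ≤ (s : ℕ) then 1 else 0)
      else (if (s : ℕ) = (c : ℕ) * (p - 1) + (k : ℕ) then 1 else 0)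
  | Sum.inr (c, k), Sum.inr c' =>
      if (k : ℕ) = 0 then (if (c : ℕ) ≤ (c' : ℕ) then 1 else 0)
      else if (k : ℕ) = p - 1 then (if (c : ℕ) < (c' : ℕ) then -1 else 0)
      else 0

lemma ctilde_sum_indicator {n : ℕ} (f : Fin n → ℝ) (N : ℕ) (hN : N < n) :
    (∑ s : Fin n, f s * (if (s : ℕ) = N then 1 else 0)) = f ⟨N, hN⟩ := by
  rw [Finset.sum_eq_single (⟨N, hN⟩ : Fin n)]
  · simp
  · intro b _ hb
    rw [if_neg, mul_zero]
    exact fun h => hb (Fin.ext h)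
  · simp

lemma ctilde_sum_indicator' {d : ℕ} (f : Fin d → ℝ) (c : Fin d) :
    (∑ c' : Fin d, f c' * (if c = c' then 1 else 0)) = f c := by
  simp [mul_ite, mul_one, mul_zero]

lemma ctilde_zero_col (p k' B : ℕ) (hp : 2 ≤ p) :
    ((if k' = 0 then (if B < 0 then (-1 : ℝ) else 0)
      else if k' = p - 1 then (if B + (p - 1) ≤ 0 then 1 else 0)
      else (if (0 : ℕ) = B + k' then 1 else 0))) = 0 := by
  split_ifs <;> first | rfl | omega

lemma ctilde_entry_eq (p c c' k k' A B : ℕ) (hp : 2 ≤ p)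
    (hk : k ≤ p - 1) (hk' : k' ≤ p - 1)
    (h1 : c' < c → B + (p - 1) ≤ A)
    (h2 : c' = c → B = A)
    (h3 : c < c' → A + (p - 1) ≤ B) :
    ((if k' = 0 then (if B < A + k then (-1 : ℝ) else 0)
      else if k' = p - 1 then (if B + (p - 1) ≤ A + k then 1 else 0)
      else (if A + k = B + k' then 1 else 0))
     + (if k' = 0 then (if c' ≤ c then (1 : ℝ) else 0)
        else if k' = p - 1 then (if c' < c then -1 else 0) else 0))
    = if c' = c ∧ k' = k then 1 else 0 := by
  split_ifs <;> first | (exfalso; omega) | norm_num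

/-- The matrix `C̃` obtained by stacking `C₁` on top of `C₂` and prepending the extra column
`e₁` is invertible, and all entries of its inverse lie in `{-1, 0, 1}`.
Rows are indexed by `Fin (d*(p-1)+1) ⊕ Fin d` (the `C₁` block rows `s ∈ {0,…,d(p-1)}`,
then the `C₂` block rows `s ∈ {1,…,d}`, zero-indexed), and columns by
`Unit ⊕ (Fin d × Fin p)` (the prepended column, then columns `(c,k)` with `c ∈ {1,…,d}`
zero-indexed and `k ∈ {0,…,p-1}`). -/
theorem ctilde_inverse (d p : ℕ) (hd : 1 ≤ d) (hp : 2 ≤ p)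
    (Ct : Matrix (Fin (d * (p - 1) + 1) ⊕ Fin d) (Unit ⊕ Fin d × Fin p) ℝ)
    (hC1 : ∀ (s : Fin (d * (p - 1) + 1)) (c : Fin d) (k : Fin p),
      Ct (Sum.inl s) (Sum.inr (c, k)) = if (s : ℕ) = (c : ℕ) * (p - 1) + (k : ℕ) then 1 else 0)
    (hC2 : ∀ (s : Fin d) (c : Fin d) (k : Fin p),
      Ct (Sum.inr s) (Sum.inr (c, k)) = if c = s then 1 else 0)
    (hcol1 : ∀ s : Fin (d * (p - 1) + 1),
      Ct (Sum.inl s) (Sum.inl ()) = if (s : ℕ) = 0 then 1 else 0)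
    (hcol2 : ∀ s : Fin d, Ct (Sum.inr s) (Sum.inl ()) = 0) :
    ∃ Cinv : Matrix (Unit ⊕ Fin d × Fin p) (Fin (d * (p - 1) + 1) ⊕ Fin d) ℝ,
      Ct * Cinv = 1 ∧ Cinv * Ct = 1 ∧
      ∀ i j, Cinv i j = -1 ∨ Cinv i j = 0 ∨ Cinv i j = 1 := by
  -- key bound: columns fit into the row range
  have hbound : ∀ (c : Fin d) (k : Fin p),
      (c : ℕ) * (p - 1) + (k : ℕ) < d * (p - 1) + 1 := by
    intro c k
    have h1 : ((c : ℕ) + 1) * (p - 1) ≤ d * (p - 1) :=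
      Nat.mul_le_mul_right _ c.isLt
    rw [add_mul, one_mul] at h1
    have h2 : (k : ℕ) ≤ p - 1 := by have := k.isLt; omega
    omega
  have hprod : ∀ c c' : Fin d,
      ((c' : ℕ) < c → (c' : ℕ) * (p - 1) + (p - 1) ≤ (c : ℕ) * (p - 1)) ∧
      ((c : ℕ) < c' → (c : ℕ) * (p - 1) + (p - 1) ≤ (c' : ℕ) * (p - 1)) := by
    intro c c'
    constructor
    · intro h
      have h1 : ((c' : ℕ) + 1) * (p - 1) ≤ (c : ℕ) * (p - 1) :=
        Nat.mul_le_mul_right _ h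
      rw [add_mul, one_mul] at h1; exact h1
    · intro h
      have h1 : ((c : ℕ) + 1) * (p - 1) ≤ (c' : ℕ) * (p - 1) :=
        Nat.mul_le_mul_right _ h
      rw [add_mul, one_mul] at h1; exact h1
  have hmul : ctildeInv d p * Ct = 1 := by
    ext i j
    rw [Matrix.mul_apply, Matrix.one_apply, Fintype.sum_sum_type]
    rcases j with u | ⟨c, k⟩
    · cases u
      simp only [hcol1, hcol2, mul_zero, Finset.sum_const_zero, add_zero]
      rw [ctilde_sum_indicator (fun s => ctildeInv d p i (Sum.inl s)) 0 (by omega)]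
      rcases i with u' | ⟨c', k'⟩
      · cases u'; simp [ctildeInv]
      · simp only [ctildeInv, show ((⟨0, by omega⟩ : Fin (d * (p - 1) + 1)) : ℕ) = 0 from rfl]
        rw [if_neg (show ¬(Sum.inr (c', k') = Sum.inl PUnit.unit) by simp)]
        exact ctilde_zero_col p (k' : ℕ) ((c' : ℕ) * (p - 1)) hp
    · simp only [hC1, hC2]
      rw [ctilde_sum_indicator (fun s => ctildeInv d p i (Sum.inl s)) _ (hbound c k),
        ctilde_sum_indicator' (fun c' => ctildeInv d p i (Sum.inr c')) c]
      rcases i with u' | ⟨c', k'⟩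
      · cases u'
        simp [ctildeInv]
      · have hk : (k : ℕ) ≤ p - 1 := by have := k.isLt; omega
        have hk' : (k' : ℕ) ≤ p - 1 := by have := k'.isLt; omega
        have key := ctilde_entry_eq p (c : ℕ) (c' : ℕ) (k : ℕ) (k' : ℕ)
          ((c : ℕ) * (p - 1)) ((c' : ℕ) * (p - 1)) hp hk hk'
          (fun h => (hprod c c').1 h)
          (fun h => by rw [h])
          (fun h => (hprod c c').2 h)
        have hcond : (Sum.inr (c', k') = (Sum.inr (c, k) : Unit ⊕ Fin d × Fin p))
            ↔ ((c' : ℕ) = (c : ℕ) ∧ (k' : ℕ) = (k : ℕ)) := by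
          simp [Prod.ext_iff, Fin.ext_iff]
        rw [if_congr hcond rfl rfl, ← key]
        simp only [ctildeInv]
  have e : (Fin (d * (p - 1) + 1) ⊕ Fin d) ≃ (Unit ⊕ Fin d × Fin p) := by
    apply Fintype.equivOfCardEq
    simp only [Fintype.card_sum, Fintype.card_fin, Fintype.card_unit, Fintype.card_prod]
    rcases p with _ | p'
    · omega
    · simp only [Nat.add_sub_cancel]
      ring
  have hmul2 : Ct * ctildeInv d p = 1 := (Matrix.mul_eq_one_comm_of_equiv e).mpr hmul
  refine ⟨ctildeInv d p, hmul2, hmul, ?_⟩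
  rintro (u | ⟨c, k⟩) (s | c') <;> simp only [ctildeInv] <;>
    first | tauto | (split_ifs <;> norm_num)
end

section
/- Let d ≥ 1 and let x_1, …, x_d be distinct real numbers. Let V ∈ ℝ^{d×d} be the Vandermonde matrix with entries V_{ij} = x_i^{j−1} (which is invertible since the parameters are distinct). Then the induced ℓ¹ operator norm of its inverse satisfies ‖V^{−1}‖₁ ≤ max_{i ∈ [d]} ∏_{j ≠ i} (1 + |x_j|)/|x_i − x_j|. -/
open Matrix

open Polynomial in
lemma abs_coeff_prod_X_sub_C_sum_le {ι : Type*} [DecidableEq ι] (f : ι → ℝ) (s : Finset ι) :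
    ∑ k ∈ Finset.range (s.card + 1), |(∏ l ∈ s, (X - C (f l))).coeff k| ≤
      ∏ l ∈ s, (1 + |f l|) := by
  induction s using Finset.induction with
  | empty => simp
  | @insert a s ha ih =>
    set P : Polynomial ℝ := ∏ l ∈ s, (X - C (f l)) with hP
    have hdeg : P.natDegree ≤ s.card := by
      refine (Polynomial.natDegree_prod_le _ _).trans ?_
      simp [Polynomial.natDegree_X_sub_C]
    have hzero : P.coeff (s.card + 1) = 0 :=
      Polynomial.coeff_eq_zero_of_natDegree_lt (by omega)
    set S : ℝ := ∑ k ∈ Finset.range (s.card + 1), |P.coeff k| with hS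
    have key : ∑ k ∈ Finset.range (s.card + 1), |P.coeff (k + 1)| + |P.coeff 0| = S := by
      rw [← Finset.sum_range_succ' (fun k => |P.coeff k|) (s.card + 1), hS,
        Finset.sum_range_succ, hzero]
      simp
    rw [Finset.card_insert_of_notMem ha, Finset.prod_insert ha, Finset.prod_insert ha]
    calc ∑ k ∈ Finset.range (s.card + 1 + 1), |((X - C (f a)) * P).coeff k|
        = ∑ k ∈ Finset.range (s.card + 1), |(P * (X - C (f a))).coeff (k + 1)|
            + |(P * (X - C (f a))).coeff 0| := by
          rw [mul_comm, Finset.sum_range_succ']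
      _ = ∑ k ∈ Finset.range (s.card + 1), |P.coeff k - P.coeff (k + 1) * f a|
            + |P.coeff 0| * |f a| := by
          simp [Polynomial.coeff_mul_X_sub_C, Polynomial.mul_coeff_zero, abs_mul]
      _ ≤ ∑ k ∈ Finset.range (s.card + 1), (|P.coeff k| + |P.coeff (k + 1)| * |f a|)
            + |P.coeff 0| * |f a| := by
          gcongr with k hk
          exact (abs_sub _ _).trans (by rw [abs_mul])
      _ = S + (∑ k ∈ Finset.range (s.card + 1), |P.coeff (k + 1)| + |P.coeff 0|) * |f a| := by
          rw [Finset.sum_add_distrib, ← Finset.sum_mul]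
          ring
      _ = (1 + |f a|) * S := by rw [key]; ring
      _ ≤ (1 + |f a|) * ∏ l ∈ s, (1 + |f l|) := by
          apply mul_le_mul_of_nonneg_left ih
          positivity

/-- Gautschi's bound on the inverse of a Vandermonde matrix: if `x_1, …, x_d` are distinct
real numbers and `V` is the Vandermonde matrix with entries `V i j = x_i^(j-1)`, then the
induced `ℓ¹` operator norm (maximum column sum of absolute values) of `V⁻¹` satisfies
`‖V⁻¹‖₁ ≤ max_i ∏_{j ≠ i} (1 + |x_j|)/|x_i - x_j|`. -/
theorem inverse_vandermonde_norm (d : ℕ) (hd : 1 ≤ d)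
    (x : Fin d → ℝ) (hx : Function.Injective x)
    (V : Matrix (Fin d) (Fin d) ℝ) (hV : ∀ i j, V i j = x i ^ (j : ℕ)) :
    Finset.univ.sup' ⟨⟨0, hd⟩, Finset.mem_univ _⟩ (fun j => ∑ i, |V⁻¹ i j|) ≤
      Finset.univ.sup' ⟨⟨0, hd⟩, Finset.mem_univ _⟩
        (fun i => ∏ j ∈ Finset.univ.erase i, (1 + |x j|) / |x i - x j|) := by
  classical
  have hinj : Set.InjOn x (Finset.univ : Finset (Fin d)) := fun a _ b _ h => hx h
  set L : Fin d → Polynomial ℝ := fun j => Lagrange.basis Finset.univ x j with hL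
  have hdegL : ∀ j, (L j).natDegree = d - 1 := fun j => by
    simpa using Lagrange.natDegree_basis hinj (Finset.mem_univ j)
  set W : Matrix (Fin d) (Fin d) ℝ := Matrix.of fun i j => (L j).coeff i with hW
  have hVW : V * W = 1 := by
    ext i j
    have heval : ∑ k : Fin d, x i ^ (k : ℕ) * (L j).coeff k = (L j).eval (x i) := by
      rw [Polynomial.eval_eq_sum_range' (n := d) (by rw [hdegL]; omega),
        ← Fin.sum_univ_eq_sum_range]
      exact Finset.sum_congr rfl fun k _ => (mul_comm _ _)
    simp only [Matrix.mul_apply, hW, Matrix.of_apply, hV, Matrix.one_apply]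
    rw [heval]
    by_cases hij : i = j
    · subst hij
      simp [hL, Lagrange.eval_basis_self hinj (Finset.mem_univ i)]
    · simp [hL, Lagrange.eval_basis_of_ne (Ne.symm hij) (Finset.mem_univ i), hij]
  have hVinv : V⁻¹ = W := Matrix.inv_eq_right_inv hVW
  apply Finset.sup'_le
  intro j _
  refine le_trans ?_ (Finset.le_sup' _ (Finset.mem_univ j))
  -- column sum bound
  have hcard : (Finset.univ.erase j).card = d - 1 := by
    simp [Finset.card_erase_of_mem]
  have hLj : L j = Polynomial.C (∏ l ∈ Finset.univ.erase j, (x j - x l)⁻¹) *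
      ∏ l ∈ Finset.univ.erase j, (Polynomial.X - Polynomial.C (x l)) := by
    rw [hL]
    unfold Lagrange.basis Lagrange.basisDivisor
    simp only [Finset.prod_mul_distrib, map_prod]
  have hbound := abs_coeff_prod_X_sub_C_sum_le x (Finset.univ.erase j)
  rw [hcard] at hbound
  have hd1 : d - 1 + 1 = d := by omega
  rw [hd1] at hbound
  calc ∑ i, |V⁻¹ i j|
      = ∑ k ∈ Finset.range d, |(L j).coeff k| := by
        rw [hVinv, ← Fin.sum_univ_eq_sum_range]
        rfl
    _ = (∏ l ∈ Finset.univ.erase j, |x j - x l|⁻¹) *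
          ∑ k ∈ Finset.range d,
            |(∏ l ∈ Finset.univ.erase j, (Polynomial.X - Polynomial.C (x l))).coeff k| := by
        rw [Finset.mul_sum]
        refine Finset.sum_congr rfl fun k _ => ?_
        rw [hLj, Polynomial.coeff_C_mul, abs_mul, Finset.abs_prod]
        simp [abs_inv]
    _ ≤ (∏ l ∈ Finset.univ.erase j, |x j - x l|⁻¹) *
          ∏ l ∈ Finset.univ.erase j, (1 + |x l|) := by
        apply mul_le_mul_of_nonneg_left hbound
        positivity
    _ = ∏ l ∈ Finset.univ.erase j, (1 + |x l|) / |x j - x l| := by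
        rw [← Finset.prod_mul_distrib]
        exact Finset.prod_congr rfl fun l _ => by rw [inv_mul_eq_div]
end
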